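/- If j is an integer and n is a positive integer such that j(j-1)(j-2)···(j-n+1) = n!, then j = n when n is odd, and j = n or j = -1 when n is even. -/

import Mathlib

/-!
The falling factorial `j(j-1)⋯(j-n+1)` is `n! * (j choose n)`, so the hypothesis says
`(j choose n) = 1`. For `j ≥ 0` this forces `j = n`; for `j = -(m+1)` upper negation gives
`(j choose n) = (-1)^n * (m+n choose n)`, which is `1` only when `n` is even and `m = 0`.
-/

open Finset

theorem Ring.prod_range_sub_eq_factorial_nsmul_choose {R : Type*} [CommRing R] [BinomialRing R]
    (r : R) (n : ℕ) : ∏ i ∈ range n, (r - i) = n.factorial • Ring.choose r n := by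
  rw [← Ring.descPochhammer_eq_factorial_smul_choose, ← descPochhammer_eval_eq_prod_range,
    ← Polynomial.aeval_eq_smeval, ← descPochhammer_map (algebraMap ℤ R),
    Polynomial.eval_map_algebraMap]

theorem Int.choose_negSucc (m n : ℕ) :
    Ring.choose (Int.negSucc m) n = (-1) ^ n * (m + n).choose n := by
  rw [Int.negSucc_eq, Ring.choose_neg, Units.smul_def, smul_eq_mul, Int.coe_negOnePow_natCast,
    ← Ring.choose_natCast]
  push_cast
  ring_nf

theorem Int.eq_of_choose_eq_one {j : ℤ} {n : ℕ} (hn : 0 < n) (h : Ring.choose j n = 1) :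
    j = n ∨ Even n ∧ j = -1 := by
  rcases j with m | m
  · rw [Int.ofNat_eq_natCast, Ring.choose_natCast, Nat.cast_eq_one, Nat.choose_eq_one_iff] at h
    left
    simp only [Int.ofNat_eq_natCast, Nat.cast_inj]
    omega
  · rw [Int.choose_negSucc] at h
    obtain ⟨hsign, hchoose⟩ | ⟨-, hchoose⟩ := Int.eq_one_or_neg_one_of_mul_eq_one' h
    · rw [Nat.cast_eq_one, Nat.choose_eq_one_iff] at hchoose
      exact Or.inr ⟨(neg_one_pow_eq_one_iff_even (by decide)).1 hsign, by omega⟩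
    · omega

/-- If `j` is an integer and `n` a positive integer with falling factorial
`j(j-1)⋯(j-n+1) = n!`, then `j = n` when `n` is odd, and `j = n` or `j = -1`
when `n` is even. -/
theorem falling_factorial_eq_factorial (n : ℕ) (hn : 0 < n) (j : ℤ)
    (h : ∏ i ∈ Finset.range n, (j - i) = (n.factorial : ℤ)) :
    (Odd n → j = n) ∧ (Even n → j = n ∨ j = -1) := by
  rw [Ring.prod_range_sub_eq_factorial_nsmul_choose, nsmul_eq_mul,
    mul_eq_left₀ (by positivity)] at h
  rcases Int.eq_of_choose_eq_one hn h with rfl | ⟨heven, rfl⟩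
  · exact ⟨fun _ => rfl, fun _ => Or.inl rfl⟩
  · exact ⟨fun hodd => absurd heven (Nat.not_even_iff_odd.2 hodd), fun _ => Or.inr rfl⟩
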